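/- arXiv:1909.00575 — 2 statements merged into one kernel-verified Lean document; each statement's English description precedes it below -/
import Mathlib

section
/- Let n ∈ ℕ, let L be a symmetric positive definite n×n real matrix, and let h > 0. Define the 2n×2n block matrices A(h) = [[I, (h/2)I], [-(h/2)L, I]] and B(h) = [[I, -(h/2)I], [(h/2)L, I]]. Then B(h) is invertible and for every vector w = (x, y) ∈ ℝⁿ × ℝⁿ, ‖B(h)⁻¹A(h)w‖² = ‖w‖², where ‖(x,y)‖² = ⟨L x, x⟩ + ⟨y, y⟩. -/
/-!
Write the wave system as `z' = G z` with `G = [[0, 1], [-L, 0]]` and let `E = diag(L, 1)`, so the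
energy is `z ⬝ᵥ E z`. Symmetry of `L` makes `G` skew-adjoint for `E`, i.e. `Gᵀ E = -E G`. The
scheme reads `(1 - cG) u = (1 + cG) w` with `c = h / 2`, so `u - w = cG p` for `p = u + w`,
and polarization writes twice the energy difference as `p ⬝ᵥ E (cG p) + cG p ⬝ᵥ E p`, whose
two terms cancel by skew-adjointness.
Invertibility of `1 - cG` comes from the Schur complement: its determinant is `det (1 + c² L)`.
-/

open Matrix

namespace Matrix

variable {m R : Type*} [Fintype m] [CommRing R]

theorem IsSkewAdjoint.mulVec_dotProduct_mulVec {J K : Matrix m m R} (hK : J.IsSkewAdjoint K)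
    (x y : m → R) : K *ᵥ x ⬝ᵥ J *ᵥ y = -(x ⬝ᵥ J *ᵥ (K *ᵥ y)) := by
  have hK' : Kᵀ * J = -(J * K) := by rw [← mul_neg]; exact hK
  rw [← vecMul_transpose, ← dotProduct_mulVec, mulVec_mulVec, hK', neg_mulVec, dotProduct_neg,
    mulVec_mulVec]

theorem IsSkewAdjoint.smul {J K : Matrix m m R} (hK : J.IsSkewAdjoint K) (c : R) :
    J.IsSkewAdjoint (c • K) := by
  rw [Matrix.IsSkewAdjoint, IsAdjointPair, transpose_smul, smul_mul, hK, ← smul_neg,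
    Matrix.mul_smul]

theorem IsSkewAdjoint.dotProduct_mulVec_self_eq_of_one_sub_mulVec_eq [IsAddTorsionFree R]
    [DecidableEq m] {J K : Matrix m m R} (hK : J.IsSkewAdjoint K) {u w : m → R}
    (huw : (1 - K) *ᵥ u = (1 + K) *ᵥ w) : u ⬝ᵥ J *ᵥ u = w ⬝ᵥ J *ᵥ w := by
  have hdiff : u - w = K *ᵥ (u + w) := by
    rw [sub_mulVec, add_mulVec, one_mulVec, one_mulVec] at huw
    rw [mulVec_add]
    linear_combination huw
  have hpolar : (u + w) ⬝ᵥ J *ᵥ (u - w) + (u - w) ⬝ᵥ J *ᵥ (u + w) =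
      2 • (u ⬝ᵥ J *ᵥ u - w ⬝ᵥ J *ᵥ w) := by
    simp only [mulVec_add, mulVec_sub, dotProduct_add, dotProduct_sub, add_dotProduct,
      sub_dotProduct]
    abel
  have hzero : (u + w) ⬝ᵥ J *ᵥ (u - w) + (u - w) ⬝ᵥ J *ᵥ (u + w) = 0 := by
    rw [hdiff, hK.mulVec_dotProduct_mulVec, add_neg_cancel]
  rw [← sub_eq_zero, ← two_nsmul_eq_zero, ← hpolar, hzero]

end Matrix

section Wave

variable {n R : Type*} [DecidableEq n]

def waveGenerator [Ring R] (L : Matrix n n R) : Matrix (n ⊕ n) (n ⊕ n) R :=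
  fromBlocks 0 1 (-L) 0

def energyMatrix [Ring R] (L : Matrix n n R) : Matrix (n ⊕ n) (n ⊕ n) R :=
  fromBlocks L 0 0 1

theorem one_add_smul_waveGenerator [Ring R] (c : R) (L : Matrix n n R) :
    1 + c • waveGenerator L = fromBlocks 1 (c • 1) (-(c • L)) 1 := by
  rw [waveGenerator, ← fromBlocks_one, fromBlocks_smul, fromBlocks_add]
  simp

theorem one_sub_smul_waveGenerator [Ring R] (c : R) (L : Matrix n n R) :
    1 - c • waveGenerator L = fromBlocks 1 (-(c • 1)) (c • L) 1 := by
  rw [waveGenerator, ← fromBlocks_one, fromBlocks_smul, sub_eq_add_neg, fromBlocks_neg,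
    fromBlocks_add]
  simp

variable [Fintype n]

theorem det_one_sub_smul_waveGenerator [CommRing R] (c : R) (L : Matrix n n R) :
    (1 - c • waveGenerator L).det = (1 + (c * c) • L).det := by
  rw [one_sub_smul_waveGenerator, det_fromBlocks_one₂₂, Matrix.neg_mul, sub_neg_eq_add,
    Matrix.smul_mul, Matrix.one_mul, smul_smul]

theorem isUnit_one_sub_smul_waveGenerator {L : Matrix n n ℝ} (hL : L.PosSemidef) (c : ℝ) :
    IsUnit (1 - c • waveGenerator L) := by
  have hpos : (1 + (c * c) • L).PosDef := PosDef.one.add_posSemidef (hL.smul (mul_self_nonneg c))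
  rw [isUnit_iff_isUnit_det, det_one_sub_smul_waveGenerator, ← isUnit_iff_isUnit_det]
  exact hpos.isUnit

theorem isSkewAdjoint_energyMatrix_waveGenerator [CommRing R] {L : Matrix n n R} (hL : L.IsSymm) :
    (energyMatrix L).IsSkewAdjoint (waveGenerator L) := by
  rw [Matrix.IsSkewAdjoint, IsAdjointPair, waveGenerator, energyMatrix, fromBlocks_transpose,
    fromBlocks_neg, fromBlocks_multiply, fromBlocks_multiply]
  simp [hL.eq]

theorem dotProduct_energyMatrix_mulVec [CommRing R] (L : Matrix n n R) (v : n ⊕ n → R) :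
    v ⬝ᵥ energyMatrix L *ᵥ v =
      L *ᵥ (fun i => v (Sum.inl i)) ⬝ᵥ (fun i => v (Sum.inl i)) +
        (fun i => v (Sum.inr i)) ⬝ᵥ (fun i => v (Sum.inr i)) := by
  rw [energyMatrix, fromBlocks_mulVec]
  simp [dotProduct, Fintype.sum_sum_type, Function.comp_def, mul_comm]

end Wave

theorem cayley_propagator_isometry_general (n : ℕ) (L : Matrix (Fin n) (Fin n) ℝ)
    (hsymm : L.IsSymm) (hpos : L.PosDef) (h : ℝ)
    (A B : Matrix (Fin n ⊕ Fin n) (Fin n ⊕ Fin n) ℝ)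
    (hA : A = Matrix.fromBlocks 1 ((h / 2) • 1) (-((h / 2) • L)) 1)
    (hB : B = Matrix.fromBlocks 1 (-((h / 2) • 1)) ((h / 2) • L) 1) :
    IsUnit B ∧
      ∀ w : Fin n ⊕ Fin n → ℝ,
        (L.mulVec (fun i => (B⁻¹ * A).mulVec w (Sum.inl i))) ⬝ᵥ
            (fun i => (B⁻¹ * A).mulVec w (Sum.inl i)) +
          (fun i => (B⁻¹ * A).mulVec w (Sum.inr i)) ⬝ᵥ
            (fun i => (B⁻¹ * A).mulVec w (Sum.inr i)) =
        (L.mulVec (fun i => w (Sum.inl i))) ⬝ᵥ (fun i => w (Sum.inl i)) +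
          (fun i => w (Sum.inr i)) ⬝ᵥ (fun i => w (Sum.inr i)) := by
  rw [← one_add_smul_waveGenerator] at hA
  rw [← one_sub_smul_waveGenerator] at hB
  subst hA hB
  have hB_unit := isUnit_one_sub_smul_waveGenerator hpos.posSemidef (h / 2)
  refine ⟨hB_unit, fun w => ?_⟩
  rw [← dotProduct_energyMatrix_mulVec, ← dotProduct_energyMatrix_mulVec]
  refine ((isSkewAdjoint_energyMatrix_waveGenerator hsymm).smul (h / 2)
    ).dotProduct_mulVec_self_eq_of_one_sub_mulVec_eq ?_
  rw [mulVec_mulVec, mul_nonsing_inv_cancel_left _ _ ((isUnit_iff_isUnit_det _).1 hB_unit)]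

theorem cayley_propagator_isometry (n : ℕ) (L : Matrix (Fin n) (Fin n) ℝ)
    (hsymm : L.IsSymm) (hpos : L.PosDef) (h : ℝ) (hh : 0 < h)
    (A B : Matrix (Fin n ⊕ Fin n) (Fin n ⊕ Fin n) ℝ)
    (hA : A = Matrix.fromBlocks 1 ((h / 2) • 1) (-((h / 2) • L)) 1)
    (hB : B = Matrix.fromBlocks 1 (-((h / 2) • 1)) ((h / 2) • L) 1) :
    IsUnit B ∧
      ∀ w : Fin n ⊕ Fin n → ℝ,
        (L.mulVec (fun i => (B⁻¹ * A).mulVec w (Sum.inl i))) ⬝ᵥ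
            (fun i => (B⁻¹ * A).mulVec w (Sum.inl i)) +
          (fun i => (B⁻¹ * A).mulVec w (Sum.inr i)) ⬝ᵥ
            (fun i => (B⁻¹ * A).mulVec w (Sum.inr i)) =
        (L.mulVec (fun i => w (Sum.inl i))) ⬝ᵥ (fun i => w (Sum.inl i)) +
          (fun i => w (Sum.inr i)) ⬝ᵥ (fun i => w (Sum.inr i)) :=
  cayley_propagator_isometry_general n L hsymm hpos h A B hA hB
end

section
/- Let H be a finite-dimensional inner product space, L: H → H symmetric positive definite, F: H → ℝ a C¹ potential with gradient f, and define the energy V(u,v) = ½⟨Lu,u⟩ + ½‖v‖² + F(u). Suppose (u₀,v₀) and (u₁,v̄₁) satisfy the AVF relations u₁ = u₀ + h·(v₀ + v̄₁)/2 and v̄₁ = v₀ - h·L·(u₀ + u₁)/2 - h·∫₀¹ f(u₀ + θ(u₁ - u₀)) dθ. Then V(u₁, v̄₁) = V(u₀, v₀). -/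
open RealInnerProductSpace

theorem avf_energy_conservation {H : Type*} [NormedAddCommGroup H]
    [InnerProductSpace ℝ H] [FiniteDimensional ℝ H]
    (L : H →ₗ[ℝ] H) (hsymm : ∀ u v : H, ⟪L u, v⟫ = ⟪u, L v⟫)
    (hpos : ∀ u : H, u ≠ 0 → 0 < ⟪L u, u⟫)
    (F : H → ℝ) (f : H → H) (hF : ∀ x, HasGradientAt F (f x) x)
    (V : H → H → ℝ)
    (hV : ∀ u v, V u v = (1 / 2) * ⟪L u, u⟫ + (1 / 2) * ‖v‖ ^ 2 + F u)
    (h : ℝ) (u₀ v₀ u₁ vbar₁ : H) (g : H)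
    (hg : ⟪g, u₁ - u₀⟫ = F u₁ - F u₀)
    (h1 : u₁ = u₀ + (h / 2) • (v₀ + vbar₁))
    (h2 : vbar₁ = v₀ - (h / 2) • L (u₀ + u₁) - h • g) :
    V u₁ vbar₁ = V u₀ v₀ := by
  have hd : u₁ - u₀ = (h / 2) • (v₀ + vbar₁) := by rw [h1]; abel
  have hvd : vbar₁ - v₀ = -((h / 2) • L (u₀ + u₁)) - h • g := by rw [h2]; abel
  -- e1 : (h/2) * ⟪L(u₀+u₁), v₀+vbar₁⟫ = ⟪L(u₀+u₁), u₁-u₀⟫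
  have e1 : (h / 2) * ⟪L (u₀ + u₁), v₀ + vbar₁⟫ = ⟪L (u₀ + u₁), u₁ - u₀⟫ := by
    rw [← real_inner_smul_right, ← hd]
  have e2 : (h / 2) * ⟪g, v₀ + vbar₁⟫ = F u₁ - F u₀ := by
    rw [← real_inner_smul_right, ← hd, hg]
  have e3 : ⟪L (u₀ + u₁), u₁ - u₀⟫ = ⟪L u₁, u₁⟫ - ⟪L u₀, u₀⟫ := by
    have hc : ⟪L u₀, u₁⟫ = ⟪L u₁, u₀⟫ := by
      rw [hsymm u₀ u₁, real_inner_comm]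
    rw [map_add, inner_add_left, inner_sub_right, inner_sub_right]
    linarith
  have e4 : ‖vbar₁‖ ^ 2 - ‖v₀‖ ^ 2 =
      -((h / 2) * ⟪L (u₀ + u₁), v₀ + vbar₁⟫) - h * ⟪g, v₀ + vbar₁⟫ := by
    have : ⟪vbar₁ - v₀, vbar₁ + v₀⟫ = ‖vbar₁‖ ^ 2 - ‖v₀‖ ^ 2 := by
      rw [inner_sub_left, inner_add_right, inner_add_right,
        real_inner_self_eq_norm_sq, real_inner_self_eq_norm_sq,
        real_inner_comm v₀ vbar₁]
      ring
    rw [← this, hvd, show vbar₁ + v₀ = v₀ + vbar₁ from by abel, inner_sub_left,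
      inner_neg_left, real_inner_smul_left, real_inner_smul_left]
  rw [hV, hV]
  nlinarith [e1, e2, e3, e4]
end
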